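/- The function G(x) := ((sin x)/x − (2 + cos x)/3)/(sin x − x·cos x)² is strictly increasing on the open interval (0, π/2). -/

import Mathlib

/-!
With `D x = sin x - x cos x` one has `D' x = x sin x`, and a direct computation gives
`G' x = P x / (3 x² D(x)³)` for an explicit trigonometric polynomial `P` in `x`, `sin x`,
`sin 2x`, `cos 2x`. `D > 0` on `(0, π/2)` because `tan x > x`. For `P > 0`, the Taylor
polynomials of `sin` and `cos` of degree `11` and `10` are lower bounds on `[0, ∞)` (by
repeated integration of `cos ≤ 1`); substituting them leaves
`x⁸ (1/90 - x²/300 + O(x⁴))`, which is positive for `x < 8/5`, and `π/2 < 8/5`.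
-/

open Real Set

open scoped Nat

noncomputable def sinTaylor (n : ℕ) (t : ℝ) : ℝ :=
  ∑ k ∈ Finset.range n, (-1) ^ k * t ^ (2 * k + 1) / (2 * k + 1)!

noncomputable def cosTaylor (n : ℕ) (t : ℝ) : ℝ :=
  ∑ k ∈ Finset.range n, (-1) ^ k * t ^ (2 * k) / (2 * k)!

theorem hasDerivAt_sinTaylor (n : ℕ) (t : ℝ) : HasDerivAt (sinTaylor n) (cosTaylor n t) t := by
  unfold sinTaylor cosTaylor
  refine (HasDerivAt.fun_sum fun k _ =>
    ((hasDerivAt_pow (2 * k + 1) t).const_mul ((-1 : ℝ) ^ k)).div_const ((2 * k + 1)! : ℝ)).congr_deriv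
    (Finset.sum_congr rfl fun k _ => ?_)
  rw [Nat.factorial_succ]
  push_cast
  field_simp

theorem hasDerivAt_cosTaylor_succ (n : ℕ) (t : ℝ) :
    HasDerivAt (cosTaylor (n + 1)) (-sinTaylor n t) t := by
  have h : cosTaylor (n + 1) = fun t : ℝ =>
      ∑ k ∈ Finset.range n, (-1 : ℝ) ^ (k + 1) * t ^ (2 * k + 2) / ((2 * k + 2)! : ℝ) + 1 := by
    ext t; simp [cosTaylor, Finset.sum_range_succ', mul_add]
  rw [h, sinTaylor, ← Finset.sum_neg_distrib]
  refine ((HasDerivAt.fun_sum fun k _ =>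
    ((hasDerivAt_pow (2 * k + 2) t).const_mul ((-1 : ℝ) ^ (k + 1))).div_const
      ((2 * k + 2)! : ℝ)).add_const 1).congr_deriv (Finset.sum_congr rfl fun k _ => ?_)
  rw [Nat.factorial_succ]
  push_cast
  field_simp
  ring

theorem nonneg_of_hasDerivAt_nonneg {f f' : ℝ → ℝ} {a : ℝ} (hf : ∀ t, HasDerivAt f (f' t) t)
    (hf' : ∀ t, a ≤ t → 0 ≤ f' t) (ha : f a = 0) {t : ℝ} (ht : a ≤ t) : 0 ≤ f t := by
  have hmono : MonotoneOn f (Ici a) :=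
    monotoneOn_of_hasDerivWithinAt_nonneg (convex_Ici a)
      (fun x _ => (hf x).continuousAt.continuousWithinAt)
      (fun x _ => (hf x).hasDerivWithinAt)
      (fun x hx => hf' x (interior_subset hx))
  simpa [ha] using hmono self_mem_Ici ht ht

theorem sin_sub_sinTaylor_alternating_of_cos {n : ℕ}
    (hcos : ∀ t, 0 ≤ t → 0 ≤ (-1) ^ n * (cos t - cosTaylor n t)) {t : ℝ} (ht : 0 ≤ t) :
    0 ≤ (-1) ^ n * (sin t - sinTaylor n t) :=
  nonneg_of_hasDerivAt_nonneg
    (fun t => (((hasDerivAt_sin t).sub (hasDerivAt_sinTaylor n t)).const_mul _)) hcos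
    (by simp [sinTaylor]) ht

theorem cos_sub_cosTaylor_succ_alternating {n : ℕ}
    (hsin : ∀ t, 0 ≤ t → 0 ≤ (-1) ^ n * (sin t - sinTaylor n t)) {t : ℝ} (ht : 0 ≤ t) :
    0 ≤ (-1) ^ (n + 1) * (cos t - cosTaylor (n + 1) t) :=
  nonneg_of_hasDerivAt_nonneg
    (fun t => (((hasDerivAt_cos t).sub (hasDerivAt_cosTaylor_succ n t)).const_mul _))
    (fun t ht => by rw [pow_succ]; linarith [hsin t ht])
    (by simp [cosTaylor, Finset.sum_range_succ']) ht

theorem cos_sub_cosTaylor_alternating (n : ℕ) {t : ℝ} (ht : 0 ≤ t) :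
    0 ≤ (-1) ^ (n + 1) * (cos t - cosTaylor (n + 1) t) := by
  induction n generalizing t with
  | zero => simpa [cosTaylor] using cos_le_one t
  | succ n ih =>
    exact cos_sub_cosTaylor_succ_alternating
      (fun t ht => sin_sub_sinTaylor_alternating_of_cos (fun s hs => ih hs) ht) ht

theorem sin_sub_sinTaylor_alternating (n : ℕ) {t : ℝ} (ht : 0 ≤ t) :
    0 ≤ (-1) ^ (n + 1) * (sin t - sinTaylor (n + 1) t) :=
  sin_sub_sinTaylor_alternating_of_cos (fun _ hs => cos_sub_cosTaylor_alternating n hs) ht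

noncomputable def G (x : ℝ) : ℝ := (sin x / x - (2 + cos x) / 3) / (sin x - x * cos x) ^ 2

noncomputable def derivGNumerator (x : ℝ) : ℝ :=
  (3 * x + x ^ 3 / 2) * sin (2 * x) + (3 / 2 + x ^ 2) * cos (2 * x) + 4 * x ^ 3 * sin x
    - 3 / 2 - 4 * x ^ 2

theorem hasDerivAt_G {x : ℝ} (hx : x ≠ 0) (hD0 : sin x - x * cos x ≠ 0) :
    HasDerivAt G (derivGNumerator x / (3 * x ^ 2 * (sin x - x * cos x) ^ 3)) x := by
  have hN : HasDerivAt (fun y => sin y / y - (2 + cos y) / 3)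
      ((cos x * x - sin x * 1) / x ^ 2 - (0 + -sin x) / 3) x :=
    ((hasDerivAt_sin x).div (hasDerivAt_id x) hx).sub
      (((hasDerivAt_const x 2).add (hasDerivAt_cos x)).div_const 3)
  have hD : HasDerivAt (fun y => sin y - y * cos y) (x * sin x) x := by
    refine ((hasDerivAt_sin x).sub ((hasDerivAt_id x).mul (hasDerivAt_cos x))).congr_deriv ?_
    simp only [id_eq]
    ring
  refine (hN.div (hD.fun_pow 2) (pow_ne_zero 2 hD0)).congr_deriv ?_
  rw [derivGNumerator, sin_two_mul, cos_two_mul_eq_one_sub]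
  norm_num only [Nat.cast_ofNat]
  field_simp
  congr 1
  linear_combination (-6 * x ^ 2) * sin_sq_add_cos_sq x

theorem sinTaylor_six (t : ℝ) : sinTaylor 6 t =
    t - t ^ 3 / 6 + t ^ 5 / 120 - t ^ 7 / 5040 + t ^ 9 / 362880 - t ^ 11 / 39916800 := by
  simp only [sinTaylor, Finset.sum_range_succ, Finset.sum_range_zero, Nat.factorial]
  push_cast
  ring

theorem cosTaylor_six (t : ℝ) : cosTaylor 6 t =
    1 - t ^ 2 / 2 + t ^ 4 / 24 - t ^ 6 / 720 + t ^ 8 / 40320 - t ^ 10 / 3628800 := by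
  simp only [cosTaylor, Finset.sum_range_succ, Finset.sum_range_zero, Nat.factorial]
  push_cast
  ring

theorem sinTaylor_six_le_sin {t : ℝ} (ht : 0 ≤ t) : sinTaylor 6 t ≤ sin t := by
  have := sin_sub_sinTaylor_alternating 5 ht
  norm_num at this
  linarith

theorem cosTaylor_six_le_cos {t : ℝ} (ht : 0 ≤ t) : cosTaylor 6 t ≤ cos t := by
  have := cos_sub_cosTaylor_alternating 5 ht
  norm_num at this
  linarith

theorem derivGNumerator_pos {x : ℝ} (hx : 0 < x) (hx' : x < 8 / 5) : 0 < derivGNumerator x := by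
  -- `derivGNumerator` with `sin`, `cos` replaced by `sinTaylor 6`, `cosTaylor 6`; the other
  -- summands below are the nonnegative remainders.
  have hQ : 0 < x ^ 8 / 90 - x ^ 10 / 300 + 1399 / 4989600 * x ^ 12 - 257 / 9979200 * x ^ 14 := by
    have hu : x ^ 2 < 64 / 25 := by nlinarith
    have hR : 0 < 1 / 90 - x ^ 2 / 300 + 1399 / 4989600 * (x ^ 2) ^ 2 - 257 / 9979200 * (x ^ 2) ^ 3 := by
      nlinarith [mul_nonneg (sub_nonneg.2 hu.le) (sq_nonneg (x ^ 2)), sq_nonneg (x ^ 2)]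
    linear_combination x ^ 8 * hR
  have e1 := mul_nonneg (by positivity : (0 : ℝ) ≤ 3 * x + x ^ 3 / 2)
    (sub_nonneg.2 (sinTaylor_six_le_sin (by positivity : (0 : ℝ) ≤ 2 * x)))
  have e2 := mul_nonneg (by positivity : (0 : ℝ) ≤ 3 / 2 + x ^ 2)
    (sub_nonneg.2 (cosTaylor_six_le_cos (by positivity : (0 : ℝ) ≤ 2 * x)))
  have e3 := mul_nonneg (by positivity : (0 : ℝ) ≤ 4 * x ^ 3) (sub_nonneg.2 (sinTaylor_six_le_sin hx.le))
  simp only [sinTaylor_six, cosTaylor_six] at e1 e2 e3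
  rw [derivGNumerator]
  linear_combination hQ + e1 + e2 + e3

theorem sin_sub_mul_cos_pos {x : ℝ} (hx : 0 < x) (hx' : x < π / 2) : 0 < sin x - x * cos x := by
  have hcos : 0 < cos x := cos_pos_of_mem_Ioo ⟨by linarith, hx'⟩
  have : sin x - x * cos x = cos x * (tan x - x) := by
    rw [tan_eq_sin_div_cos]; field_simp
  rw [this]
  exact mul_pos hcos (sub_pos.2 (lt_tan hx hx'))

theorem G_strictMonoOn :
    StrictMonoOn (fun x : ℝ => (sin x / x - (2 + cos x) / 3) / (sin x - x * cos x) ^ 2) (Ioo 0 (π / 2)) := by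
  change StrictMonoOn G (Ioo 0 (π / 2))
  have hD : ∀ x ∈ Ioo 0 (π / 2), 0 < sin x - x * cos x := fun x hx => sin_sub_mul_cos_pos hx.1 hx.2
  have hG : ∀ x ∈ Ioo 0 (π / 2), HasDerivAt G
      (derivGNumerator x / (3 * x ^ 2 * (sin x - x * cos x) ^ 3)) x :=
    fun x hx => hasDerivAt_G hx.1.ne' (hD x hx).ne'
  refine strictMonoOn_of_deriv_pos (convex_Ioo 0 (π / 2))
    (fun x hx => (hG x hx).continuousAt.continuousWithinAt) fun x hx => ?_
  rw [interior_Ioo] at hx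
  have hx' : x < 8 / 5 := by linarith [hx.2, pi_lt_d2]
  rw [(hG x hx).deriv]
  exact div_pos (derivGNumerator_pos hx.1 hx')
    (mul_pos (mul_pos three_pos (pow_pos hx.1 2)) (pow_pos (hD x hx) 3))
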